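/- arXiv:1207.4026 — 3 statements merged into one kernel-verified Lean document; each statement's English description precedes it below -/
import Mathlib

section
/- Let X, Y ⊂ ℝ^N be compact, μ ∈ P(X) non-atomic, and let s : X → Y be a Borel map with s_#μ = ν. Let η = δ_{s(x)} ⊗ μ. If γ = f(x) ⊗ μ ∈ Π(μ,ν) satisfies f_#μ = (δ_{s(·)})_#μ (i.e., γ belongs to the transport class of η), then γ is induced by a transport map: γ = δ_{t(x)} ⊗ μ where t(x) = β(f(x)) = ∫_Y y df(x)(y) for μ-a.e. x. -/
/-!
The transport-class condition says that the push-forward of `μ` by `f` equals that by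
`x ↦ δ_{s(x)}`, which is carried by the set of Dirac masses. That set is compact (it is the
continuous image of the compact `Y`), hence measurable, so `f x` is a Dirac mass `δ_{t(x)}`
for `μ`-a.e. `x`. The inverse of `y ↦ δ_y` is continuous on its range, which makes `t`
measurable; then `β(f x) = t x` and the two plans agree because their fibers agree a.e.
-/

open MeasureTheory

noncomputable instance {α : Type*} [MeasurableSpace α] [TopologicalSpace α]
    [OpensMeasurableSpace α] : MeasurableSpace (ProbabilityMeasure α) := borel _

/-- The Dirac mass as a probability measure. -/
noncomputable def diracProb {Y : Type*} [MeasurableSpace Y] (y : Y) : ProbabilityMeasure Y :=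
  ⟨Measure.dirac y, inferInstance⟩

/-- The plan `f(x) ⊗ μ` on `X × Y` with disintegration fibers `f x`. -/
noncomputable def plan {X Y : Type*} [MeasurableSpace X] [MeasurableSpace Y]
    (μ : Measure X) (f : X → ProbabilityMeasure Y) : Measure (X × Y) :=
  μ.bind fun x => ((f x : Measure Y)).map (Prod.mk x)

open Set

-- `rfl` because the σ-algebra in force is the Borel one declared above, not Mathlib's Giry one.
instance inst_s4 {α : Type*} [MeasurableSpace α] [TopologicalSpace α] [OpensMeasurableSpace α] :
    BorelSpace (ProbabilityMeasure α) :=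
  ⟨rfl⟩

section DiracMasses

variable {α Y : Type*} [MeasurableSpace α] [MeasurableSpace Y] [TopologicalSpace Y]

lemma measurableSet_range_diracProba [OpensMeasurableSpace Y] [CompactSpace Y]
    [T2Space (ProbabilityMeasure Y)] :
    MeasurableSet (range (diracProba (X := Y))) :=
  (isCompact_range continuous_diracProba).isClosed.measurableSet

lemma ae_mem_range_diracProba_of_map_eq [OpensMeasurableSpace Y] {μ : Measure α}
    {f : α → ProbabilityMeasure Y} {s : α → Y} (hf : Measurable f) (hs : Measurable s)
    (hD : MeasurableSet (range (diracProba (X := Y))))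
    (hmap : μ.map f = μ.map (fun x => diracProba (s x))) :
    ∀ᵐ x ∂μ, f x ∈ range (diracProba (X := Y)) := by
  have hsδ : Measurable fun x => diracProba (s x) := continuous_diracProba.measurable.comp hs
  change μ (f ⁻¹' (range diracProba)ᶜ) = 0
  have hsδD : (fun x => diracProba (s x)) ⁻¹' range diracProba = univ :=
    preimage_eq_univ_iff.mpr (range_comp_subset_range s diracProba)
  rw [← Measure.map_apply hf hD.compl, hmap, Measure.map_apply hsδ hD.compl, preimage_compl,
    hsδD, compl_univ, measure_empty]

lemma exists_measurable_ae_eq_diracProba [BorelSpace Y] [Nonempty Y] [T0Space Y]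
    [CompletelyRegularSpace Y]
    {μ : Measure α} {f : α → ProbabilityMeasure Y} (hf : Measurable f)
    (hD : MeasurableSet (range (diracProba (X := Y))))
    (hfD : ∀ᵐ x ∂μ, f x ∈ range (diracProba (X := Y))) :
    ∃ t : α → Y, Measurable t ∧ ∀ᵐ x ∂μ, f x = diracProba (t x) := by
  classical
  let δinv : ProbabilityMeasure Y → Y := fun m =>
    if h : m ∈ range diracProba then diracProbaInverse ⟨m, h⟩ else Classical.arbitrary Y
  have hδinv : Measurable δinv :=
    continuous_diracProbaEquivSymm.measurable.dite measurable_const hD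
  refine ⟨δinv ∘ f, hδinv.comp hf, ?_⟩
  filter_upwards [hfD] with x hx
  simp only [Function.comp_apply, δinv, dif_pos hx, diracProba_diracProbaInverse]

end DiracMasses

lemma plan_congr_ae {X Y : Type*} [MeasurableSpace X] [MeasurableSpace Y] {μ : Measure X}
    {f g : X → ProbabilityMeasure Y} (h : f =ᵐ[μ] g) : plan μ f = plan μ g :=
  Measure.bind_congr_right (h.mono fun x hx => by simp only [hx])

theorem stmt4_general {N : ℕ} (X Y : Set (EuclideanSpace ℝ (Fin N)))
    (hY : IsCompact Y)
    (μ : Measure X) [IsProbabilityMeasure μ]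
    (s : X → Y) (hs : Measurable s)
    (f : X → ProbabilityMeasure Y) (hf : Measurable f)
    (hclass : μ.map f = μ.map (fun x => diracProb (s x))) :
    ∃ t : X → Y, Measurable t ∧
      (∀ᵐ x ∂μ, (t x : EuclideanSpace ℝ (Fin N)) =
        ∫ y, (y : EuclideanSpace ℝ (Fin N)) ∂(f x : Measure Y)) ∧
      plan μ (fun x => diracProb (t x)) = plan μ f := by
  have : CompactSpace Y := isCompact_iff_compactSpace.mp hY
  have : Nonempty Y := ⟨s (nonempty_of_isProbabilityMeasure μ).some⟩
  have hD := measurableSet_range_diracProba (Y := Y)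
  obtain ⟨t, ht, hft⟩ := exists_measurable_ae_eq_diracProba hf hD
    (ae_mem_range_diracProba_of_map_eq hf hs hD hclass)
  refine ⟨t, ht, ?_, plan_congr_ae (hft.mono fun x hx => hx.symm)⟩
  filter_upwards [hft] with x hx
  rw [hx]
  exact (integral_dirac _ _).symm

/-- Let `X, Y ⊆ ℝ^N` be compact, `μ ∈ P(X)` non-atomic, and
`s : X → Y` Borel with `s_#μ = ν`; let `η = δ_{s(x)} ⊗ μ`.  If `γ = f(x) ⊗ μ ∈ Π(μ,ν)`
satisfies `f_#μ = (δ_{s(·)})_#μ` (i.e. `γ` is in the transport class of `η`), then `γ`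
is induced by a transport map `t` with `t(x) = β(f(x)) = ∫_Y y d f(x)(y)` for μ-a.e. `x`:
`γ = δ_{t(x)} ⊗ μ`. -/
theorem stmt4 {N : ℕ} (X Y : Set (EuclideanSpace ℝ (Fin N)))
    (hX : IsCompact X) (hY : IsCompact Y)
    (μ : Measure X) [IsProbabilityMeasure μ] [NullSingletonClass μ]
    (s : X → Y) (hs : Measurable s)
    (ν : Measure Y) (hν : μ.map s = ν)
    (f : X → ProbabilityMeasure Y) (hf : Measurable f)
    (hmarg : (plan μ f).map Prod.snd = ν)
    (hclass : μ.map f = μ.map (fun x => diracProb (s x))) :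
    ∃ t : X → Y, Measurable t ∧
      (∀ᵐ x ∂μ, (t x : EuclideanSpace ℝ (Fin N)) =
        ∫ y, (y : EuclideanSpace ℝ (Fin N)) ∂(f x : Measure Y)) ∧
      plan μ (fun x => diracProb (t x)) = plan μ f :=
  stmt4_general X Y hY μ s hs f hf hclass
end

section
/- Let Y be a compact metric space. The generalized barycenter map β : P(P(Y)) → P(Y), defined by β(N) = ∫_{P(Y)} λ dN(λ) (i.e., β(N)(B) = ∫_{P(Y)} λ(B) dN(λ)), is 1-Lipschitz with respect to the 1-Wasserstein distances: W(β(N₁), β(N₂)) ≤ W_{W}(N₁, N₂), where the distance on P(P(Y)) is the Wasserstein distance built on the metric space (P(Y), W). -/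
open MeasureTheory
open scoped ENNReal

instance {α : Type*} [MeasurableSpace α] [TopologicalSpace α]
    [OpensMeasurableSpace α] : BorelSpace (ProbabilityMeasure α) := ⟨rfl⟩

/-- The 1-Wasserstein distance on `P(Y)` for a compact metric space `Y`, via
Kantorovich duality: `W(μ,ν) = sup { ∫ φ d(μ−ν) : φ ∈ Lip₁(Y) }`. -/
noncomputable def Wdist {Y : Type*} [MetricSpace Y] [MeasurableSpace Y]
    (μ ν : Measure Y) : ℝ :=
  ⨆ φ : {φ : Y → ℝ // LipschitzWith 1 φ}, (∫ y, φ.1 y ∂μ - ∫ y, φ.1 y ∂ν)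

/-- The 1-Wasserstein distance on `P(P(Y))` built on the metric space `(P(Y), W)`, via
Kantorovich duality: the supremum is over functionals which are 1-Lipschitz with respect
to the Wasserstein distance `W` on `P(Y)`. -/
noncomputable def WWdist {Y : Type*} [MetricSpace Y] [MeasurableSpace Y] [BorelSpace Y]
    (N₁ N₂ : Measure (ProbabilityMeasure Y)) : ℝ :=
  ⨆ φ : {φ : ProbabilityMeasure Y → ℝ //
      ∀ a b : ProbabilityMeasure Y, |φ a - φ b| ≤ Wdist (a : Measure Y) (b : Measure Y)},
    (∫ l, φ.1 l ∂N₁ - ∫ l, φ.1 l ∂N₂)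


/-!
For a 1-Lipschitz `φ` on `Y`, the functional `λ ↦ ∫ φ dλ` is 1-Lipschitz for `W` by the very
definition of `W`, and the barycenter identity `∫ φ dβ(N) = ∫∫ φ dλ dN(λ)` turns
`∫ φ d(β(N₁) - β(N₂))` into one of the quantities whose supremum is `W_W(N₁, N₂)`.

The analytic work is in showing that both suprema are finite, i.e. that every `W`-Lipschitz
functional `ψ` on `P(Y)` is integrable. It is bounded since `W ≤ 2 diam Y`, and it is weakly
continuous, hence Borel, since `W(a, b) → 0` as `a → b` weakly: by Arzelà–Ascoli the 1-Lipschitz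
functions bounded by `diam Y` form a compact set of bounded continuous functions, on which
`(f, a) ↦ ∫ f da` is jointly continuous. The barycenter identity itself needs the inclusion
`P(Y) → Measure Y` to be Borel measurable for the weak topology, which follows from the portmanteau
theorem: `λ ↦ λ(F)` is upper semicontinuous for closed `F`.
-/

open Filter Topology Set ProbabilityTheory
open scoped NNReal

section Oscillation

variable {α : Type*} [MeasurableSpace α] {μ ν : Measure α}

lemma abs_integral_sub_le_of_forall_abs_sub_le [IsProbabilityMeasure μ] {f : α → ℝ} {c C : ℝ}
    (hf : Integrable f μ) (h : ∀ x, |f x - c| ≤ C) : |∫ x, f x ∂μ - c| ≤ C := by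
  have hC : ‖∫ x, (f x - c) ∂μ‖ ≤ C * μ.real univ :=
    norm_integral_le_of_norm_le_const (.of_forall h)
  rwa [integral_sub hf (integrable_const c), integral_const, probReal_univ, one_smul,
    mul_one] at hC

lemma integral_sub_integral_le_of_forall_abs_sub_le [IsProbabilityMeasure μ]
    [IsProbabilityMeasure ν] {f : α → ℝ} {c C : ℝ} (hμ : Integrable f μ) (hν : Integrable f ν)
    (h : ∀ x, |f x - c| ≤ C) : ∫ x, f x ∂μ - ∫ x, f x ∂ν ≤ 2 * C := by
  have h₁ := abs_le.1 (abs_integral_sub_le_of_forall_abs_sub_le hμ h)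
  have h₂ := abs_le.1 (abs_integral_sub_le_of_forall_abs_sub_le hν h)
  linarith [h₁.2, h₂.1]

end Oscillation

section Wasserstein

variable {Y : Type*} [MetricSpace Y]

instance : Nonempty {φ : Y → ℝ // LipschitzWith 1 φ} := ⟨⟨0, LipschitzWith.const' 0⟩⟩

variable [CompactSpace Y]

lemma abs_sub_le_diam_of_lipschitzWith_one {φ : Y → ℝ} (hφ : LipschitzWith 1 φ) (x y : Y) :
    |φ x - φ y| ≤ Metric.diam (univ : Set Y) :=
  (hφ.dist_le_mul x y).trans <| by
    simpa using Metric.dist_le_diam_of_mem isCompact_univ.isBounded (mem_univ x) (mem_univ y)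

variable [MeasurableSpace Y] [BorelSpace Y]

lemma LipschitzWith.integrable_of_compactSpace {K : ℝ≥0} {φ : Y → ℝ} (hφ : LipschitzWith K φ)
    (μ : Measure Y) [IsFiniteMeasure μ] : Integrable φ μ :=
  (BoundedContinuousFunction.mkOfCompact ⟨φ, hφ.continuous⟩).integrable μ

variable {μ ν : Measure Y} [IsProbabilityMeasure μ] [IsProbabilityMeasure ν]

lemma integral_sub_integral_le_two_mul_diam {φ : Y → ℝ} (hφ : LipschitzWith 1 φ) :
    ∫ y, φ y ∂μ - ∫ y, φ y ∂ν ≤ 2 * Metric.diam (univ : Set Y) := by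
  obtain ⟨y₀⟩ := nonempty_of_isProbabilityMeasure μ
  exact integral_sub_integral_le_of_forall_abs_sub_le (hφ.integrable_of_compactSpace μ)
    (hφ.integrable_of_compactSpace ν) fun y => abs_sub_le_diam_of_lipschitzWith_one hφ y y₀

lemma wdist_le_two_mul_diam : Wdist μ ν ≤ 2 * Metric.diam (univ : Set Y) :=
  ciSup_le fun φ => integral_sub_integral_le_two_mul_diam φ.2

lemma integral_sub_integral_le_wdist {φ : Y → ℝ} (hφ : LipschitzWith 1 φ) :
    ∫ y, φ y ∂μ - ∫ y, φ y ∂ν ≤ Wdist μ ν :=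
  le_ciSup (f := fun φ : {φ : Y → ℝ // LipschitzWith 1 φ} => ∫ y, φ.1 y ∂μ - ∫ y, φ.1 y ∂ν)
    ⟨_, forall_mem_range.2 fun φ => integral_sub_integral_le_two_mul_diam φ.2⟩ ⟨φ, hφ⟩

lemma abs_integral_sub_integral_le_wdist {φ : Y → ℝ} (hφ : LipschitzWith 1 φ) :
    |∫ y, φ y ∂μ - ∫ y, φ y ∂ν| ≤ Wdist μ ν := by
  refine abs_sub_le_iff.2 ⟨integral_sub_integral_le_wdist hφ, ?_⟩
  have h := integral_sub_integral_le_wdist (μ := μ) (ν := ν) hφ.neg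
  simp only [Pi.neg_apply, integral_neg] at h
  linarith

lemma wdist_nonneg : 0 ≤ Wdist μ ν := by
  simpa using abs_integral_sub_integral_le_wdist (μ := μ) (ν := ν) (LipschitzWith.const' 0)

end Wasserstein

section WeakTopology

open BoundedContinuousFunction

lemma continuous_integral_boundedContinuousFunction_prod {X : Type*} [TopologicalSpace X]
    [MeasurableSpace X] [OpensMeasurableSpace X] :
    Continuous fun p : (X →ᵇ ℝ) × ProbabilityMeasure X => ∫ x, p.1 x ∂(p.2 : Measure X) :=
  continuous_prod_of_continuous_lipschitzWith _ 1
    (fun f => ProbabilityMeasure.continuous_integral_boundedContinuousFunction f)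
    fun μ => LipschitzWith.of_dist_le_mul fun f g => by
      rw [Real.dist_eq, ← integral_sub (f.integrable _) (g.integrable _), dist_eq_norm]
      simpa using (f - g).norm_integral_le_norm (μ : Measure X)

variable {Y : Type*} [MetricSpace Y] [CompactSpace Y]

lemma isCompact_closure_setOf_lipschitzWith_one_abs_le_diam :
    IsCompact (closure
      {f : Y →ᵇ ℝ | LipschitzWith 1 f ∧ ∀ y, |f y| ≤ Metric.diam (univ : Set Y)}) :=
  arzela_ascoli _ isCompact_Icc _ (fun _ y hf => abs_le.1 (hf.2 y))
    (LipschitzWith.uniformEquicontinuous _ 1 fun f => f.2.1).equicontinuous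

variable [MeasurableSpace Y] [BorelSpace Y]

lemma tendsto_wdist_nhds (b : ProbabilityMeasure Y) :
    Tendsto (fun a : ProbabilityMeasure Y => Wdist (a : Measure Y) b) (𝓝 b) (𝓝 0) := by
  set K := closure
    {f : Y →ᵇ ℝ | LipschitzWith 1 f ∧ ∀ y, |f y| ≤ Metric.diam (univ : Set Y)}
  let F : ProbabilityMeasure Y → (Y →ᵇ ℝ) → ℝ := fun a f =>
    ∫ y, f y ∂(a : Measure Y) - ∫ y, f y ∂(b : Measure Y)
  have hF : Continuous ↿F :=
    (continuous_integral_boundedContinuousFunction_prod.comp continuous_swap).sub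
      (continuous_integral_boundedContinuousFunction_prod.comp
        (continuous_snd.prodMk continuous_const))
  have hK := isCompact_closure_setOf_lipschitzWith_one_abs_le_diam (Y := Y)
  have hFb : sSup (F b '' K) = 0 := by
    have : (0 : Y →ᵇ ℝ) ∈ K :=
      subset_closure ⟨LipschitzWith.const' 0, fun _ => by simpa using Metric.diam_nonneg⟩
    simp [F, (Set.nonempty_of_mem this).image_const]
  have hWF : ∀ a : ProbabilityMeasure Y, Wdist (a : Measure Y) b ≤ sSup (F a '' K) := by
    intro a
    refine ciSup_le fun ⟨φ, hφ⟩ => ?_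
    obtain ⟨y₀⟩ := nonempty_of_isProbabilityMeasure (b : Measure Y)
    let g : Y →ᵇ ℝ := mkOfCompact ⟨fun y => φ y - φ y₀, hφ.continuous.sub continuous_const⟩
    have hg : g ∈ K := subset_closure ⟨fun x y => by simpa [g] using hφ x y,
      fun y => abs_sub_le_diam_of_lipschitzWith_one hφ y y₀⟩
    have hshift : ∀ ρ : ProbabilityMeasure Y,
        ∫ y, g y ∂(ρ : Measure Y) = ∫ y, φ y ∂(ρ : Measure Y) - φ y₀ := fun ρ => by
      simp [g, integral_sub (hφ.integrable_of_compactSpace (ρ : Measure Y)) (integrable_const _)]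
    calc ∫ y, φ y ∂(a : Measure Y) - ∫ y, φ y ∂(b : Measure Y) = F a g := by
          simp only [F, hshift]; ring
      _ ≤ sSup (F a '' K) := le_csSup (hK.bddAbove_image (hF.comp
          (continuous_const.prodMk continuous_id)).continuousOn) (mem_image_of_mem _ hg)
  exact squeeze_zero (fun _ => wdist_nonneg) hWF (hFb ▸ (hK.continuous_sSup hF).tendsto b)

lemma continuous_of_abs_sub_le_wdist {ψ : ProbabilityMeasure Y → ℝ}
    (hψ : ∀ a b : ProbabilityMeasure Y, |ψ a - ψ b| ≤ Wdist (a : Measure Y) (b : Measure Y)) :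
    Continuous ψ :=
  continuous_iff_continuousAt.2 fun b => tendsto_iff_dist_tendsto_zero.2 <|
    squeeze_zero (fun _ => dist_nonneg) (fun a => hψ a b) (tendsto_wdist_nhds b)

end WeakTopology

section Barycenter

variable {Ω : Type*} [TopologicalSpace Ω] [MeasurableSpace Ω] [OpensMeasurableSpace Ω]
  [HasOuterApproxClosed Ω]

lemma upperSemicontinuous_probabilityMeasure_apply_of_isClosed {F : Set Ω} (hF : IsClosed F) :
    UpperSemicontinuous fun μ : ProbabilityMeasure Ω => (μ : Measure Ω) F :=
  upperSemicontinuous_iff_limsup_le.2 fun _ =>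
    ProbabilityMeasure.limsup_measure_closed_le_of_tendsto tendsto_id hF

variable [BorelSpace Ω]

lemma measurable_probabilityMeasure_toMeasure :
    Measurable fun μ : ProbabilityMeasure Ω => (μ : Measure Ω) :=
  .measure_of_isPiSystem_of_isProbabilityMeasure
    (BorelSpace.measurable_eq.trans borel_eq_generateFrom_isClosed) isPiSystem_isClosed
    fun _ hF => (upperSemicontinuous_probabilityMeasure_apply_of_isClosed hF).measurable

lemma integral_eq_integral_integral_of_forall_measure_eq_lintegral
    {N : Measure (ProbabilityMeasure Ω)} {ν : Measure Ω}
    (hb : ∀ s : Set Ω, MeasurableSet s → ν s = ∫⁻ l, (l : Measure Ω) s ∂N) {f : Ω → ℝ}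
    (hf : Integrable f ν) : ∫ x, f x ∂ν = ∫ l, ∫ x, f x ∂(l : Measure Ω) ∂N := by
  let κ : Kernel (ProbabilityMeasure Ω) Ω := ⟨_, measurable_probabilityMeasure_toMeasure⟩
  have hν : ν = κ ∘ₘ N := by
    ext s hs
    rw [Measure.bind_apply hs κ.aemeasurable, hb s hs]
    rfl
  rw [hν, Measure.comp_eq_comp_const_apply] at hf ⊢
  rw [Kernel.integral_comp hf]
  rfl

end Barycenter

section IteratedWasserstein

variable {Y : Type*} [MetricSpace Y] [CompactSpace Y] [MeasurableSpace Y] [BorelSpace Y]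
  {N₁ N₂ : Measure (ProbabilityMeasure Y)} [IsProbabilityMeasure N₁] [IsProbabilityMeasure N₂]

lemma integral_sub_integral_le_four_mul_diam {ψ : ProbabilityMeasure Y → ℝ}
    (hψ : ∀ a b : ProbabilityMeasure Y, |ψ a - ψ b| ≤ Wdist (a : Measure Y) (b : Measure Y)) :
    ∫ l, ψ l ∂N₁ - ∫ l, ψ l ∂N₂ ≤ 4 * Metric.diam (univ : Set Y) := by
  obtain ⟨l₀⟩ := nonempty_of_isProbabilityMeasure N₁
  have hbound : ∀ l, |ψ l - ψ l₀| ≤ 2 * Metric.diam (univ : Set Y) := fun l =>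
    (hψ l l₀).trans wdist_le_two_mul_diam
  have hint : ∀ (N : Measure (ProbabilityMeasure Y)) [IsProbabilityMeasure N], Integrable ψ N :=
    fun N _ => .of_bound (continuous_of_abs_sub_le_wdist hψ).aestronglyMeasurable
      (2 * Metric.diam (univ : Set Y) + |ψ l₀|) <| .of_forall fun l => by
        have := hbound l
        rw [Real.norm_eq_abs]
        linarith [abs_sub_abs_le_abs_sub (ψ l) (ψ l₀)]
  linarith [integral_sub_integral_le_of_forall_abs_sub_le (hint N₁) (hint N₂) hbound]

lemma integral_sub_integral_le_wwdist {ψ : ProbabilityMeasure Y → ℝ}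
    (hψ : ∀ a b : ProbabilityMeasure Y, |ψ a - ψ b| ≤ Wdist (a : Measure Y) (b : Measure Y)) :
    ∫ l, ψ l ∂N₁ - ∫ l, ψ l ∂N₂ ≤ WWdist N₁ N₂ :=
  le_ciSup (f := fun ψ : {ψ : ProbabilityMeasure Y → ℝ //
      ∀ a b : ProbabilityMeasure Y, |ψ a - ψ b| ≤ Wdist (a : Measure Y) (b : Measure Y)} =>
      ∫ l, ψ.1 l ∂N₁ - ∫ l, ψ.1 l ∂N₂)
    ⟨_, forall_mem_range.2 fun ψ => integral_sub_integral_le_four_mul_diam ψ.2⟩ ⟨ψ, hψ⟩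

end IteratedWasserstein

/-- For a compact metric space `Y`, the generalized barycenter map
`β : P(P(Y)) → P(Y)`, `β(N)(B) = ∫_{P(Y)} λ(B) dN(λ)`, is 1-Lipschitz for the
1-Wasserstein distances: `W(β(N₁), β(N₂)) ≤ W_W(N₁, N₂)`. -/
theorem stmt7 {Y : Type*} [MetricSpace Y] [CompactSpace Y] [MeasurableSpace Y] [BorelSpace Y]
    (N₁ N₂ : Measure (ProbabilityMeasure Y))
    [IsProbabilityMeasure N₁] [IsProbabilityMeasure N₂]
    (ν₁ ν₂ : Measure Y) [IsProbabilityMeasure ν₁] [IsProbabilityMeasure ν₂]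
    (hb₁ : ∀ s : Set Y, MeasurableSet s → ν₁ s = ∫⁻ l, (l : Measure Y) s ∂N₁)
    (hb₂ : ∀ s : Set Y, MeasurableSet s → ν₂ s = ∫⁻ l, (l : Measure Y) s ∂N₂) :
    Wdist ν₁ ν₂ ≤ WWdist N₁ N₂ := by
  refine ciSup_le fun ⟨φ, hφ⟩ => ?_
  calc ∫ y, φ y ∂ν₁ - ∫ y, φ y ∂ν₂
      = ∫ l, ∫ y, φ y ∂(l : Measure Y) ∂N₁ - ∫ l, ∫ y, φ y ∂(l : Measure Y) ∂N₂ := by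
        rw [integral_eq_integral_integral_of_forall_measure_eq_lintegral hb₁
            (hφ.integrable_of_compactSpace ν₁),
          integral_eq_integral_integral_of_forall_measure_eq_lintegral hb₂
            (hφ.integrable_of_compactSpace ν₂)]
    _ ≤ WWdist N₁ N₂ :=
        integral_sub_integral_le_wwdist fun a b => abs_integral_sub_integral_le_wdist hφ
end

section
/- Let X, Y be compact metric spaces, c : X × Y → ℝ continuous, μ ∈ P(X), and ν = Σᵢ aᵢ δ_{yᵢ} a finitely supported probability measure on Y with distinct atoms yᵢ. Suppose μ is c-continuous, i.e., μ({x : c(x,yᵢ) − c(x,yⱼ) = λ}) = 0 for all i ≠ j and all λ ∈ ℝ. Then every optimal transport plan γ for MK(c,μ,ν) is induced by a transport map: γ = (Id × t)_#μ for some Borel t : X → Y with t_#μ = ν. -/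
/-!
Write `γ = ∑ᵢ γᵢ ⊗ δ_{yᵢ}`, where `γᵢ` is the part of `μ` that `γ` sends to `yᵢ`. For `i ≠ j` put
`f = c(·, yᵢ) - c(·, yⱼ)`. If `f` were larger on a `γᵢ`-positive set than on a `γⱼ`-positive set,
exchanging equal masses of these two sets between `yᵢ` and `yⱼ` would lower the cost. Hence some
threshold `l` has `γᵢ` carried by `{f < l}` and `γⱼ` by `{f > l}`, the level set `{f = l}` being
`μ`-null. So the `γᵢ` are mutually singular, and a measurable `t` equal to `yᵢ` `γᵢ`-a.e.
induces `γ`.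
-/

open MeasureTheory Set Function
open scoped ENNReal

theorem exists_Ici_Iic_null_of_forall_lt {p q : Measure ℝ}
    [NullSingletonClass p] [NullSingletonClass q]
    (hp : ∃ r, p (Ici r) = 0) (hq : ∃ r, q (Iic r) = 0)
    (h : ∀ r₁ r₂, r₁ < r₂ → p (Ici r₂) = 0 ∨ q (Iic r₁) = 0) :
    ∃ l, p (Ici l) = 0 ∧ q (Iic l) = 0 := by
  set S := {r | p (Ici r) = 0}
  have hS_mono : ∀ {r r'}, r ∈ S → r ≤ r' → r' ∈ S := fun hr hrr' =>
    measure_mono_null (Ici_subset_Ici.2 hrr') hr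
  by_cases hbdd : BddBelow S
  swap
  · obtain ⟨r, hr⟩ := hq
    obtain ⟨s, hs, hsr⟩ := not_bddBelow_iff.1 hbdd r
    exact ⟨r, hS_mono hs hsr.le, hr⟩
  refine ⟨sInf S, ?_, ?_⟩
  · obtain ⟨u, -, hu_gt, hu⟩ := exists_seq_strictAnti_tendsto (sInf S)
    rw [← measure_congr Ioi_ae_eq_Ici, ← iUnion_Ici_eq_Ioi_of_lt_of_tendsto hu_gt hu]
    refine measure_iUnion_null fun n => ?_
    obtain ⟨s, hs, hsu⟩ := exists_lt_of_csInf_lt hp (hu_gt n)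
    exact hS_mono hs hsu.le
  · obtain ⟨u, -, hu_lt, hu⟩ := exists_seq_strictMono_tendsto (sInf S)
    rw [← measure_congr Iio_ae_eq_Iic, ← iUnion_Iic_eq_Iio_of_lt_of_tendsto hu_lt hu]
    refine measure_iUnion_null fun n => ?_
    obtain ⟨r, hur, hr⟩ := exists_between (hu_lt n)
    refine (h _ _ hur).resolve_left fun hrS => ?_
    exact (csInf_le hbdd hrS).not_gt hr

theorem exists_measurable_ae_eq_const_of_pairwise_mutuallySingular {X Y ι : Type*}
    [MeasurableSpace X] [MeasurableSpace Y] [Nonempty Y] {m : ι → Measure X} (s : Finset ι)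
    (hm : (s : Set ι).Pairwise fun i j => m i ⟂ₘ m j) (y : ι → Y) :
    ∃ t : X → Y, Measurable t ∧ ∀ i ∈ s, t =ᵐ[m i] fun _ => y i := by
  classical
  induction s using Finset.induction with
  | empty => exact ⟨fun _ => Classical.arbitrary Y, measurable_const, by simp⟩
  | insert a s ha ih =>
    rw [Finset.coe_insert, pairwise_insert] at hm
    obtain ⟨t, ht, hty⟩ := ih hm.1
    have hsing : m a ⟂ₘ ∑ j ∈ s, m j :=
      Finset.sum_induction _ _ (fun _ _ => .add_right) .zero_right fun j hj =>
        (hm.2 j hj (ne_of_mem_of_not_mem hj ha).symm).1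
    set U := hsing.nullSetᶜ
    refine ⟨U.piecewise (fun _ => y a) t,
      measurable_const.piecewise hsing.measurableSet_nullSet.compl ht, ?_⟩
    intro i hi
    rcases Finset.mem_insert.1 hi with rfl | hi
    · have hU : ∀ᵐ x ∂m i, x ∈ U := by
        simp [ae_iff, U, hsing.measure_nullSet]
      filter_upwards [hU] with x hx using piecewise_eq_of_mem _ _ _ hx
    · have hU : m i U = 0 := Measure.absolutelyContinuous_of_le
        (Finset.single_le_sum (fun _ _ => Measure.zero_le _) hi) hsing.measure_compl_nullSet
      filter_upwards [hty i hi, measure_eq_zero_iff_ae_notMem.1 hU] with x hx hxU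
      rw [piecewise_eq_of_notMem _ _ _ hxU, hx]

section Plans

variable {X Y : Type*} [MeasurableSpace X] [MeasurableSpace Y]

theorem map_map_prodMk_const_fst (α : Measure X) (b : Y) :
    (α.map (·, b)).map Prod.fst = α := by
  rw [Measure.map_map measurable_fst measurable_prodMk_right]
  exact Measure.map_id

theorem map_map_prodMk_const_snd (α : Measure X) (b : Y) :
    (α.map (·, b)).map Prod.snd = α univ • Measure.dirac b := by
  rw [Measure.map_map measurable_snd measurable_prodMk_right]
  exact Measure.map_const α b

theorem map_sub_add_of_map_eq {Z : Type*} [MeasurableSpace Z] {γ δ δ' : Measure X}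
    [IsFiniteMeasure δ] (hδ : δ ≤ γ) {g : X → Z} (hg : Measurable g)
    (h : δ'.map g = δ.map g) : (γ - δ + δ').map g = γ.map g := by
  rw [Measure.map_add _ _ hg, h, ← Measure.map_add _ _ hg, Measure.sub_add_cancel_of_le hδ]

theorem exists_le_measure_univ_eq_ae_mem {κ : Measure X} {P : Set X} (hP : MeasurableSet P)
    (hκP : κ P ≠ 0) (hκP' : κ P ≠ ∞) {m : ℝ≥0∞} (hm : m ≤ κ P) :
    ∃ α ≤ κ, α univ = m ∧ ∀ᵐ x ∂α, x ∈ P := by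
  refine ⟨(m / κ P) • κ.restrict P, fun s => ?_, ?_, ?_⟩
  · calc (m / κ P) * κ.restrict P s ≤ 1 * κ s :=
          mul_le_mul' (ENNReal.div_le_of_le_mul (by rwa [one_mul])) (Measure.restrict_le_self s)
      _ = κ s := one_mul _
  · rw [Measure.smul_apply, Measure.restrict_apply_univ, smul_eq_mul,
      ENNReal.div_mul_cancel hκP hκP']
  · exact Measure.ae_smul_measure (ae_restrict_mem hP) _

def IsOptimalPlan (c : X → Y → ℝ) (γ : Measure (X × Y)) : Prop :=
  ∀ γ' : Measure (X × Y), γ'.map Prod.fst = γ.map Prod.fst → γ'.map Prod.snd = γ.map Prod.snd →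
    ∫ p, c p.1 p.2 ∂γ ≤ ∫ p, c p.1 p.2 ∂γ'

variable {c : X → Y → ℝ} {γ : Measure (X × Y)} {C : ℝ}

theorem IsOptimalPlan.integral_sub_le_of_swap (hγ : IsOptimalPlan c γ) [IsFiniteMeasure γ]
    (hc : Measurable (uncurry c)) (hC : ∀ x y, |c x y| ≤ C) {b b' : Y} {α β : Measure X}
    [IsFiniteMeasure α] [IsFiniteMeasure β] (hαβ : α univ = β univ)
    (hle : α.map (·, b) + β.map (·, b') ≤ γ) :
    ∫ x, (c x b - c x b') ∂α ≤ ∫ x, (c x b - c x b') ∂β := by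
  set δ := α.map (·, b) + β.map (·, b')
  set δ' := β.map (·, b) + α.map (·, b')
  have : IsFiniteMeasure δ := isFiniteMeasure_of_le γ hle
  have : IsFiniteMeasure (γ - δ) := isFiniteMeasure_of_le γ Measure.sub_le
  have hfst : δ'.map Prod.fst = δ.map Prod.fst := by
    simp only [δ, δ', Measure.map_add _ _ measurable_fst, map_map_prodMk_const_fst, add_comm]
  have hsnd : δ'.map Prod.snd = δ.map Prod.snd := by
    simp only [δ, δ', Measure.map_add _ _ measurable_snd, map_map_prodMk_const_snd, hαβ]
  have hcost := hγ _ (map_sub_add_of_map_eq hle measurable_fst hfst)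
    (map_sub_add_of_map_eq hle measurable_snd hsnd)
  have hint : ∀ (θ : Measure (X × Y)) [IsFiniteMeasure θ],
      Integrable (fun p : X × Y => c p.1 p.2) θ :=
    fun θ _ => .of_bound hc.aestronglyMeasurable C (ae_of_all _ fun p => hC p.1 p.2)
  have hint' : ∀ (θ : Measure X) [IsFiniteMeasure θ] (z : Y), Integrable (c · z) θ :=
    fun θ _ z => .of_bound (hc.comp measurable_prodMk_right).aestronglyMeasurable C
      (ae_of_all _ fun x => hC x z)
  have hmap : ∀ (θ : Measure X) (z : Y), ∫ p, c p.1 p.2 ∂(θ.map (·, z)) = ∫ x, c x z ∂θ :=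
    fun θ z => integral_map measurable_prodMk_right.aemeasurable hc.aestronglyMeasurable
  have hγδ : ∫ p, c p.1 p.2 ∂γ = ∫ p, c p.1 p.2 ∂(γ - δ) + ∫ p, c p.1 p.2 ∂δ := by
    conv_lhs => rw [← Measure.sub_add_cancel_of_le hle]
    exact integral_add_measure (hint _) (hint _)
  rw [hγδ, integral_add_measure (hint _) (hint _)] at hcost
  simp only [δ, δ', integral_add_measure (hint _) (hint _), hmap] at hcost
  rw [integral_sub (hint' _ _) (hint' _ _), integral_sub (hint' _ _) (hint' _ _)]
  linarith

theorem IsOptimalPlan.measure_le_sub_eq_zero_or (hγ : IsOptimalPlan c γ) [IsFiniteMeasure γ]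
    (hc : Measurable (uncurry c)) (hC : ∀ x y, |c x y| ≤ C) {b b' : Y} {κ κ' : Measure X}
    [IsFiniteMeasure κ] [IsFiniteMeasure κ'] (hle : κ.map (·, b) + κ'.map (·, b') ≤ γ)
    {r₁ r₂ : ℝ} (hr : r₁ < r₂) :
    κ {x | r₂ ≤ c x b - c x b'} = 0 ∨ κ' {x | c x b - c x b' ≤ r₁} = 0 := by
  set f := fun x => c x b - c x b'
  have hf : Measurable f := (hc.comp measurable_prodMk_right).sub (hc.comp measurable_prodMk_right)
  have hint : ∀ (θ : Measure X) [IsFiniteMeasure θ], Integrable f θ := fun θ _ =>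
    .of_bound hf.aestronglyMeasurable (C + C) (ae_of_all _ fun x => (abs_sub _ _).trans
      (add_le_add (hC x b) (hC x b')))
  by_contra! h
  set m := min (κ {x | r₂ ≤ f x}) (κ' {x | f x ≤ r₁})
  obtain ⟨α, hακ, hα, hαf⟩ := exists_le_measure_univ_eq_ae_mem
    (measurableSet_le measurable_const hf) h.1 (measure_ne_top _ _) (min_le_left _ _)
  obtain ⟨β, hβκ', hβ, hβf⟩ := exists_le_measure_univ_eq_ae_mem
    (measurableSet_le hf measurable_const) h.2 (measure_ne_top _ _) (min_le_right _ _)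
  have : IsFiniteMeasure α := isFiniteMeasure_of_le κ hακ
  have : IsFiniteMeasure β := isFiniteMeasure_of_le κ' hβκ'
  have hswap := hγ.integral_sub_le_of_swap hc hC (hα.trans hβ.symm) <|
    (add_le_add (Measure.map_mono hακ measurable_prodMk_right)
      (Measure.map_mono hβκ' measurable_prodMk_right)).trans hle
  have hα_ge : ∫ _, r₂ ∂α ≤ ∫ x, f x ∂α := integral_mono_ae (integrable_const _) (hint α) hαf
  have hβ_le : ∫ x, f x ∂β ≤ ∫ _, r₁ ∂β := integral_mono_ae (hint β) (integrable_const _) hβf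
  have hm : 0 < m.toReal :=
    ENNReal.toReal_pos (lt_min (pos_iff_ne_zero.2 h.1) (pos_iff_ne_zero.2 h.2)).ne'
      (ne_top_of_le_ne_top (measure_ne_top _ _) (min_le_left _ _))
  simp only [integral_const, measureReal_def, hα, hβ, smul_eq_mul] at hα_ge hβ_le
  nlinarith

theorem IsOptimalPlan.mutuallySingular (hγ : IsOptimalPlan c γ) [IsFiniteMeasure γ]
    (hc : Measurable (uncurry c)) (hC : ∀ x y, |c x y| ≤ C) {b b' : Y} {κ κ' : Measure X}
    [IsFiniteMeasure κ] [IsFiniteMeasure κ'] (hle : κ.map (·, b) + κ'.map (·, b') ≤ γ)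
    (hκ : ∀ l, κ {x | c x b - c x b' = l} = 0) (hκ' : ∀ l, κ' {x | c x b - c x b' = l} = 0) :
    κ ⟂ₘ κ' := by
  set f := fun x => c x b - c x b'
  have hf : Measurable f := (hc.comp measurable_prodMk_right).sub (hc.comp measurable_prodMk_right)
  have hf_bdd : ∀ x, |f x| ≤ C + C := fun x =>
    (abs_sub _ _).trans (add_le_add (hC x b) (hC x b'))
  have hmap : ∀ (θ : Measure X) {s : Set ℝ}, MeasurableSet s → θ.map f s = θ (f ⁻¹' s) :=
    fun θ _ hs => Measure.map_apply hf hs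
  have : NullSingletonClass (κ.map f) :=
    ⟨fun l => (hmap κ (measurableSet_singleton l)).trans (hκ l)⟩
  have : NullSingletonClass (κ'.map f) :=
    ⟨fun l => (hmap κ' (measurableSet_singleton l)).trans (hκ' l)⟩
  obtain ⟨l, hκl, hκ'l⟩ := exists_Ici_Iic_null_of_forall_lt (p := κ.map f) (q := κ'.map f)
    ⟨C + C + 1, by
      rw [hmap κ measurableSet_Ici]
      exact measure_mono_null (fun x (hx : _ ≤ f x) => by linarith [(abs_le.1 (hf_bdd x)).2])
        measure_empty⟩
    ⟨-(C + C + 1), by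
      rw [hmap κ' measurableSet_Iic]
      exact measure_mono_null (fun x (hx : f x ≤ _) => by linarith [(abs_le.1 (hf_bdd x)).1])
        measure_empty⟩
    fun r₁ r₂ hr => by
      rw [hmap κ measurableSet_Ici, hmap κ' measurableSet_Iic]
      exact hγ.measure_le_sub_eq_zero_or hc hC hle hr
  rw [hmap κ measurableSet_Ici] at hκl
  rw [hmap κ' measurableSet_Iic] at hκ'l
  exact Measure.MutuallySingular.mk hκl hκ'l fun x _ => le_total l (f x)

noncomputable def slice (γ : Measure (X × Y)) (b : Y) : Measure X :=
  (γ.restrict (Prod.snd ⁻¹' {b})).map Prod.fst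

instance (γ : Measure (X × Y)) [IsFiniteMeasure γ] (b : Y) : IsFiniteMeasure (slice γ b) := by
  unfold slice
  infer_instance

theorem slice_le_map_fst (γ : Measure (X × Y)) (b : Y) : slice γ b ≤ γ.map Prod.fst :=
  Measure.map_mono Measure.restrict_le_self measurable_fst

theorem map_slice_prodMk [MeasurableSingletonClass Y] (γ : Measure (X × Y)) (b : Y) :
    (slice γ b).map (·, b) = γ.restrict (Prod.snd ⁻¹' {b}) := by
  rw [slice, Measure.map_map measurable_prodMk_right measurable_fst]
  conv_rhs => rw [← Measure.map_id (μ := γ.restrict _)]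
  refine Measure.map_congr ?_
  filter_upwards [ae_restrict_mem (measurable_snd (measurableSet_singleton b))] with p hp
  exact Prod.ext rfl hp.symm

theorem map_slice_add_map_slice_le [MeasurableSingletonClass Y] (γ : Measure (X × Y)) {b b' : Y}
    (hbb' : b ≠ b') : (slice γ b).map (·, b) + (slice γ b').map (·, b') ≤ γ := by
  rw [map_slice_prodMk, map_slice_prodMk, ← Measure.restrict_union
    ((disjoint_singleton.2 hbb').preimage _) (measurable_snd (measurableSet_singleton b'))]
  exact Measure.restrict_le_self

theorem sum_map_slice_prodMk [MeasurableSingletonClass Y] {ι : Type*} [Fintype ι] {y : ι → Y}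
    (hy : Injective y) {γ : Measure (X × Y)} (hγ : ∀ᵐ p ∂γ, p.2 ∈ range y) :
    ∑ i, (slice γ (y i)).map (·, y i) = γ := by
  simp_rw [map_slice_prodMk]
  rw [← Measure.sum_fintype, ← Measure.restrict_iUnion
    (fun i j hij => (disjoint_singleton.2 (hy.ne hij)).preimage _)
    (fun i => measurable_snd (measurableSet_singleton _)), ← preimage_iUnion,
    iUnion_singleton_eq_range]
  exact Measure.restrict_eq_self_of_ae_mem hγ

theorem map_prodMk_sum_of_ae_eq_const {ι : Type*} [Fintype ι] {m : ι → Measure X} {t : X → Y}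
    (ht : Measurable t) {y : ι → Y} (hty : ∀ i, t =ᵐ[m i] fun _ => y i) :
    (∑ i, m i).map (fun x => (x, t x)) = ∑ i, (m i).map (·, y i) := by
  have hgraph : Measurable fun x => (x, t x) := measurable_id.prodMk ht
  rw [Measure.map_finset_sum hgraph.aemeasurable]
  refine Finset.sum_congr rfl fun i _ => Measure.map_congr ?_
  filter_upwards [hty i] with x hx
  rw [hx]

end Plans

/-- Let `X, Y` be compact metric, `c` continuous, `μ ∈ P(X)` and
`ν = Σᵢ aᵢ δ_{yᵢ}` finitely supported with distinct atoms.  If `μ` is `c`-continuous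
(`μ{x : c(x,yᵢ) − c(x,yⱼ) = λ} = 0` for `i ≠ j`), then every optimal plan `γ` for
`MK(c,μ,ν)` is induced by a transport map: `γ = (Id × t)_#μ` with `t_#μ = ν`. -/
theorem stmt16 {X Y : Type*}
    [MetricSpace X] [CompactSpace X] [MeasurableSpace X] [BorelSpace X]
    [MetricSpace Y] [CompactSpace Y] [MeasurableSpace Y] [BorelSpace Y]
    (c : X → Y → ℝ) (hc : Continuous fun p : X × Y => c p.1 p.2)
    (μ : Measure X) [IsProbabilityMeasure μ]
    {ι : Type*} [Fintype ι] (a : ι → ℝ≥0∞) (y : ι → Y) (hy : Function.Injective y)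
    (ν : Measure Y) [IsProbabilityMeasure ν]
    (hν : ν = ∑ i : ι, a i • Measure.dirac (y i))
    (hccont : ∀ i j : ι, i ≠ j → ∀ l : ℝ, μ {x | c x (y i) - c x (y j) = l} = 0)
    (γ : Measure (X × Y)) (hγ₁ : γ.map Prod.fst = μ) (hγ₂ : γ.map Prod.snd = ν)
    (hopt : ∀ γ' : Measure (X × Y), γ'.map Prod.fst = μ → γ'.map Prod.snd = ν →
      (∫ p, c p.1 p.2 ∂γ) ≤ ∫ p, c p.1 p.2 ∂γ') :
    ∃ t : X → Y, Measurable t ∧ μ.map t = ν ∧ γ = μ.map fun x => (x, t x) := by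
  have : IsFiniteMeasure (γ.map Prod.fst) := hγ₁ ▸ inferInstance
  have : IsFiniteMeasure γ := Measure.isFiniteMeasure_of_map measurable_fst.aemeasurable
  have hγ_opt : IsOptimalPlan c γ := fun γ' h₁ h₂ => hopt γ' (h₁.trans hγ₁) (h₂.trans hγ₂)
  obtain ⟨C, hC⟩ := isCompact_univ.exists_bound_of_continuousOn hc.continuousOn
  have hrange : ∀ᵐ p ∂γ, p.2 ∈ range y := ae_of_ae_map measurable_snd.aemeasurable <| by
    simp [hγ₂, hν, ae_iff, Measure.finsetSum_apply]
  have hγ_sum := sum_map_slice_prodMk hy hrange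
  have hμ_sum : ∑ i, slice γ (y i) = μ := by
    rw [← hγ₁]
    conv_rhs => rw [← hγ_sum, Measure.map_finset_sum measurable_fst.aemeasurable]
    simp only [map_map_prodMk_const_fst]
  have hnull : ∀ k {s}, μ s = 0 → slice γ (y k) s = 0 := fun _ _ hs =>
    Measure.absolutelyContinuous_of_le (hγ₁ ▸ slice_le_map_fst γ _) hs
  have hsing : ((Finset.univ : Finset ι) : Set ι).Pairwise
      fun i j => slice γ (y i) ⟂ₘ slice γ (y j) := fun i _ j _ hij =>
    hγ_opt.mutuallySingular hc.measurable (fun x z => hC (x, z) trivial)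
      (map_slice_add_map_slice_le γ (hy.ne hij))
      (fun l => hnull i (hccont i j hij l)) (fun l => hnull j (hccont i j hij l))
  have : Nonempty Y := nonempty_of_isProbabilityMeasure ν
  obtain ⟨t, ht, hty⟩ := exists_measurable_ae_eq_const_of_pairwise_mutuallySingular _ hsing y
  have hγt : γ = μ.map fun x => (x, t x) := by
    rw [← hμ_sum, map_prodMk_sum_of_ae_eq_const ht fun i => hty i (Finset.mem_univ i), hγ_sum]
  refine ⟨t, ht, ?_, hγt⟩
  have hgraph : Measurable fun x => (x, t x) := measurable_id.prodMk ht
  rw [← hγ₂, hγt, Measure.map_map measurable_snd hgraph]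
  rfl
end
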